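/- If a path v in Q is obtained from a path u by a single one-step reduction, then ℘(v) ≤ ℘(u). Consequently, if v is obtained from u by any finite sequence of one-step reductions, then ℘(v) ≤ ℘(u); i.e., the turning number can only decrease monotonically under reduction. -/

import Mathlib

/-- The arrows of the KLRW quiver on vertices `{0, …, n}`:
`p i : i → i+1` and `q i : i+1 → i` (for `0 ≤ i < n`), and loops `s i : i → i`.
(Here `p i` stands for the paper's `p_{i+1}` and `q i` for `q_i`.) -/
inductive Arrow (n : ℕ) where
  | p (i : Fin n)
  | q (i : Fin n)
  | s (i : Fin (n + 1))
deriving DecidableEq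

/-- One-step reduction of words (in word order, leftmost = last applied): replace one
occurrence of a left-hand side of the reduction system `q_i p_{i+1} ⟶ s_i`,
`p_i q_{i−1} ⟶ s_i`, `s_i p_i ⟶ p_i s_{i−1}`, `s_i q_i ⟶ q_i s_{i+1}` by the
corresponding right-hand side. -/
inductive Step {n : ℕ} : List (Arrow n) → List (Arrow n) → Prop where
  | qp (L R : List (Arrow n)) (i : Fin n) :
      Step (L ++ [.q i, .p i] ++ R) (L ++ [.s i.castSucc] ++ R)
  | pq (L R : List (Arrow n)) (i : Fin n) :
      Step (L ++ [.p i, .q i] ++ R) (L ++ [.s i.succ] ++ R)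
  | sp (L R : List (Arrow n)) (i : Fin n) :
      Step (L ++ [.s i.succ, .p i] ++ R) (L ++ [.p i, .s i.castSucc] ++ R)
  | sq (L R : List (Arrow n)) (i : Fin n) :
      Step (L ++ [.s i.castSucc, .q i] ++ R) (L ++ [.q i, .s i.succ] ++ R)

/-- Direction of an arrow: `+1` for `p`, `−1` for `q`, `0` for the loops `s`. -/
def dir {n : ℕ} : Arrow n → ℤ
  | .p _ => 1
  | .q _ => -1
  | .s _ => 0

/-- Number of sign changes in a list of integers (adjacent pairs with negative product). -/
def signChanges : List ℤ → ℕ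
  | a :: b :: l => (if a * b < 0 then 1 else 0) + signChanges (b :: l)
  | _ => 0

/-- The turning number `℘(u)` of a word: the number of sign changes in the subsequence of
nonzero directions of its arrows. -/
def turns {n : ℕ} (u : List (Arrow n)) : ℕ :=
  signChanges ((u.map dir).filter fun d => d ≠ 0)

/-!
The two commuting rules `s p ⟶ p s`, `s q ⟶ q s` leave the sequence of nonzero directions
unchanged, while the two contracting rules `q p ⟶ s`, `p q ⟶ s` delete from it an adjacent pair
of opposite signs. Such a deletion loses the sign change inside the pair and creates at most one
new sign change, between the neighbours of the pair.
-/

lemma signChanges_le_cons (a : ℤ) (l : List ℤ) : signChanges l ≤ signChanges (a :: l) := by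
  cases l <;> simp [signChanges]

lemma signChanges_cons_le_succ (a : ℤ) (l : List ℤ) :
    signChanges (a :: l) ≤ signChanges l + 1 := by
  cases l with
  | nil => simp [signChanges]
  | cons b l => simp only [signChanges]; split_ifs <;> omega

lemma signChanges_cons_cons_of_mul_neg {x y : ℤ} (h : x * y < 0) (l : List ℤ) :
    signChanges (x :: y :: l) = signChanges (y :: l) + 1 := by
  simp [signChanges, h, add_comm]

lemma signChanges_le_insert_pair {x y : ℤ} (h : x * y < 0) (A B : List ℤ) :
    signChanges (A ++ B) ≤ signChanges (A ++ x :: y :: B) := by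
  induction A with
  | nil =>
    rw [List.nil_append, List.nil_append, signChanges_cons_cons_of_mul_neg h]
    exact (signChanges_le_cons y B).trans (Nat.le_succ _)
  | cons a A ih =>
    cases A with
    | nil =>
      calc signChanges (a :: B) ≤ signChanges B + 1 := signChanges_cons_le_succ a B
        _ ≤ signChanges (x :: y :: B) := by
          rw [signChanges_cons_cons_of_mul_neg h]
          exact Nat.succ_le_succ (signChanges_le_cons y B)
        _ ≤ signChanges (a :: x :: y :: B) := signChanges_le_cons a _
    | cons b A =>
      simp only [List.cons_append, signChanges] at ih ⊢
      omega

theorem turns_le_of_step {n : ℕ} {u v : List (Arrow n)} (h : Step u v) : turns v ≤ turns u := by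
  cases h with
  | qp => simpa [turns, dir] using signChanges_le_insert_pair (x := -1) (y := 1) (by simp) _ _
  | pq => simpa [turns, dir] using signChanges_le_insert_pair (x := 1) (y := -1) (by simp) _ _
  | sp | sq => simp [turns, dir]

/-- The turning number can only decrease under one-step reductions, hence also under any
finite sequence of one-step reductions. -/
theorem turns_antitone_under_reduction (n : ℕ) :
    (∀ u v : List (Arrow n), Step u v → turns v ≤ turns u) ∧
    (∀ u v : List (Arrow n), Relation.ReflTransGen Step u v → turns v ≤ turns u) := by
  refine ⟨fun _ _ => turns_le_of_step, fun u v h => ?_⟩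
  have := Relation.ReflTransGen.lift (p := (· ≥ ·)) turns (fun _ _ => turns_le_of_step) u v h
  rwa [Relation.reflTransGen_eq_self] at this
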